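/- The little q-Jacobi polynomials satisfy the contiguous relation (1 - zqb)·p_n(z; a, bq | q) = (bq^{n+1}(aq^{n+1}-1)/(abq^{2n+2}-1))·p_{n+1}(z; a, b | q) + ((bq^{n+1}-1)/(abq^{2n+2}-1))·p_n(z; a, b | q) for all z. -/

import Mathlib

open MeasureTheory Finset

/-- Finite q-Pochhammer symbol `(a;q)_k = ∏_{j<k} (1 - a q^j)`. -/
noncomputable def qPoch (q a : ℝ) (k : ℕ) : ℝ := ∏ j ∈ Finset.range k, (1 - a * q ^ j)

/-- Infinite q-Pochhammer symbol `(a;q)_∞ = ∏_{j≥0} (1 - a q^j)`. -/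
noncomputable def qPochInf (q a : ℝ) : ℝ := ∏' k : ℕ, (1 - a * q ^ k)

/-- General basic hypergeometric series `ᵣφₛ` with numerator parameters `as`,
denominator parameters `bs`. -/
noncomputable def bhs (q : ℝ) (as bs : List ℝ) (z : ℝ) : ℝ :=
  ∑' k : ℕ,
    (as.map (fun a => qPoch q a k)).prod /
        (qPoch q q k * (bs.map (fun b => qPoch q b k)).prod) *
      ((-1 : ℝ) ^ k * q ^ (k * (k - 1) / 2)) ^ ((1 + (bs.length : ℤ)) - (as.length : ℤ)) *
      z ^ k

/-- q-Laguerre polynomial `L_n^{(δ)}(z;q)` (terminating `₁φ₁` series). -/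
noncomputable def qLaguerre (q δ : ℝ) (n : ℕ) (z : ℝ) : ℝ :=
  (qPoch q (q ^ (δ + 1)) n / qPoch q q n) *
    ∑ k ∈ Finset.range (n + 1),
      qPoch q (q ^ (-(n : ℝ))) k / (qPoch q q k * qPoch q (q ^ (δ + 1)) k) *
        ((-1 : ℝ) ^ k * q ^ (k * (k - 1) / 2)) * (-(q ^ ((n : ℝ) + δ + 1)) * z) ^ k

/-- Little q-Jacobi polynomial `p_n(z;a,b|q)` (terminating `₂φ₁` series). -/
noncomputable def lqJacobi (q a b : ℝ) (n : ℕ) (z : ℝ) : ℝ :=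
  ∑ k ∈ Finset.range (n + 1),
    qPoch q (q ^ (-(n : ℝ))) k * qPoch q (a * b * q ^ (n + 1)) k /
      (qPoch q q k * qPoch q (a * q) k) * (q * z) ^ k

/-- q-Meixner polynomial `M_n(x;b,c;q)` evaluated at `x = q^{-z}`. -/
noncomputable def qMeixner (q b c : ℝ) (n : ℕ) (x : ℝ) : ℝ :=
  ∑ k ∈ Finset.range (n + 1),
    qPoch q (q ^ (-(n : ℝ))) k * qPoch q x k / (qPoch q q k * qPoch q (b * q) k) *
      (-(q ^ (n + 1)) / c) ^ k

/-- Al-Salam-Carlitz I polynomial `U_n^a(z;q)`. -/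
noncomputable def alSalamCarlitzI (q a : ℝ) (n : ℕ) (z : ℝ) : ℝ :=
  (-a) ^ n * q ^ (n * (n - 1) / 2) *
    ∑ k ∈ Finset.range (n + 1),
      qPoch q (q ^ (-(n : ℝ))) k * qPoch q z⁻¹ k / (qPoch q q k * qPoch q 0 k) *
        (q * z / a) ^ k

/-- The `₂φ₂` polynomial `φ_n^{(k)}(z) = ₂φ₂(q^{-n}, q^{γ+k}; q^{δ+1}, q^{γ}; q, -q^{n+δ+1} z)`. -/
noncomputable def phi2 (q δ γ : ℝ) (n k : ℕ) (z : ℝ) : ℝ :=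
  ∑ j ∈ Finset.range (n + 1),
    qPoch q (q ^ (-(n : ℝ))) j * qPoch q (q ^ (γ + (k : ℝ))) j /
      (qPoch q q j * qPoch q (q ^ (δ + 1)) j * qPoch q (q ^ γ) j) *
      ((-1 : ℝ) ^ j * q ^ (j * (j - 1) / 2)) * (-(q ^ ((n : ℝ) + δ + 1)) * z) ^ j

/-- The `₃φ₂` polynomial `Φ_n^{(k)}(z) = ₃φ₂(q^{-n}, q^{γ+k}, abq^{n+1}; aq, q^{γ}; q, qz)`. -/
noncomputable def Phi3 (q a b γ : ℝ) (n k : ℕ) (z : ℝ) : ℝ :=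
  ∑ j ∈ Finset.range (n + 1),
    qPoch q (q ^ (-(n : ℝ))) j * qPoch q (q ^ (γ + (k : ℝ))) j *
        qPoch q (a * b * q ^ (n + 1)) j /
      (qPoch q q j * qPoch q (a * q) j * qPoch q (q ^ γ) j) * (q * z) ^ j

/-- The `₃φ₂` polynomial `φ_n^{(k)}` built on q-Meixner data, at `x = q^{-z}`:
`₃φ₂(q^{-n}, q^{γ+k}, q^{-z}; bq, q^{γ}; q, -q^{n+1}/c)`. -/
noncomputable def phi3M (q b c γ : ℝ) (n k : ℕ) (x : ℝ) : ℝ :=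
  ∑ j ∈ Finset.range (n + 1),
    qPoch q (q ^ (-(n : ℝ))) j * qPoch q (q ^ (γ + (k : ℝ))) j * qPoch q x j /
      (qPoch q q j * qPoch q (b * q) j * qPoch q (q ^ γ) j) * (-(q ^ (n + 1)) / c) ^ j

/-- The `₃φ₂` polynomial `ϕ_n^{(k)}(z) = ₃φ₂(q^{-n}, q^{γ+k}, z^{-1}; 0, q^{γ}; q, qz/a)`. -/
noncomputable def phi3AS (q a γ : ℝ) (n k : ℕ) (z : ℝ) : ℝ :=
  ∑ j ∈ Finset.range (n + 1),
    qPoch q (q ^ (-(n : ℝ))) j * qPoch q (q ^ (γ + (k : ℝ))) j * qPoch q z⁻¹ j /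
      (qPoch q q j * qPoch q 0 j * qPoch q (q ^ γ) j) * (q * z / a) ^ j

/-!
With `A = q^{-n}`, `B = abq^{n+2}`, `C = aq` and `x = qz`, the polynomials `p_n(z; a, bq)`,
`p_{n+1}(z; a, b)` and `p_n(z; a, b)` are the terminating series `₂φ₁(A, B; C; q, x)`,
`₂φ₁(A/q, B; C; q, x)` and `₂φ₁(A, B/q; C; q, x)`, and the relation is the contiguous relation
`(1 - ABx/(Cq)) φ(A, B) = B(C - A)/(C(B - A)) φ(A/q, B) + A(B - C)/(C(B - A)) φ(A, B/q)`.
It holds coefficient by coefficient: the coefficients of `x^{k+1}` all share the factor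
`(A;q)_k (B;q)_k / ((q;q)_{k+1} (C;q)_{k+1})`, and what remains is a quadratic identity in `q^k`.
Truncating after `x^{n+1}` loses nothing because `(q^{-n};q)_{n+1} = 0`.
-/

noncomputable def phi21Coeff (q A B C : ℝ) (k : ℕ) : ℝ :=
  qPoch q A k * qPoch q B k / (qPoch q q k * qPoch q C k)

noncomputable def phi21Trunc (q A B C : ℝ) (N : ℕ) (x : ℝ) : ℝ :=
  ∑ k ∈ range N, phi21Coeff q A B C k * x ^ k

lemma qPoch_succ (q c : ℝ) (k : ℕ) : qPoch q c (k + 1) = qPoch q c k * (1 - c * q ^ k) :=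
  prod_range_succ _ _

lemma qPoch_succ' (q c : ℝ) (k : ℕ) : qPoch q c (k + 1) = (1 - c) * qPoch q (c * q) k := by
  rw [qPoch, prod_range_succ', pow_zero, mul_one, mul_comm]
  congr 1
  exact prod_congr rfl fun j _ => by ring

lemma qPoch_pos {q c : ℝ} (hq0 : 0 ≤ q) (hq1 : q ≤ 1) (hc : c < 1) (k : ℕ) :
    0 < qPoch q c k := by
  refine prod_pos fun j _ => ?_
  have h0 : 0 ≤ q ^ j := pow_nonneg hq0 j
  have h1 : q ^ j ≤ 1 := pow_le_one₀ hq0 hq1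
  rcases le_or_gt c 0 with hc0 | hc0 <;> nlinarith

lemma qPoch_inv_pow_self {q : ℝ} (hq : q ≠ 0) (n : ℕ) : qPoch q (q ^ n)⁻¹ (n + 1) = 0 :=
  prod_eq_zero (self_mem_range_succ n) (by rw [inv_mul_cancel₀ (pow_ne_zero n hq), sub_self])

lemma phi21Trunc_zero (q A B C x : ℝ) : phi21Trunc q A B C 0 x = 0 :=
  sum_range_zero _

lemma phi21Trunc_one (q A B C x : ℝ) : phi21Trunc q A B C 1 x = 1 := by
  simp [phi21Trunc, phi21Coeff, qPoch]

lemma phi21Trunc_succ (q A B C : ℝ) (N : ℕ) (x : ℝ) :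
    phi21Trunc q A B C (N + 1) x = phi21Trunc q A B C N x + phi21Coeff q A B C N * x ^ N :=
  sum_range_succ _ _

lemma phi21Trunc_succ_of_qPoch_eq_zero {q A B C : ℝ} {N : ℕ} (hA : qPoch q A N = 0) (x : ℝ) :
    phi21Trunc q A B C (N + 1) x = phi21Trunc q A B C N x := by
  rw [phi21Trunc_succ, phi21Coeff, hA, zero_mul, zero_div, zero_mul, add_zero]

lemma contiguous_factor_identity {q A B C : ℝ} (hq : q ≠ 0) (hC : C ≠ 0) (hAB : B ≠ A) (u : ℝ) :
    (1 - A * u) * (1 - B * u) - A * B / (C * q) * ((1 - q * u) * (1 - C * u)) =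
      B * (C - A) / (C * (B - A)) * ((1 - A / q) * (1 - B * u)) +
        A * (B - C) / (C * (B - A)) * ((1 - A * u) * (1 - B / q)) := by
  have hBA : B - A ≠ 0 := sub_ne_zero.mpr hAB
  field_simp
  ring

lemma phi21Coeff_contiguous {q A B C : ℝ} (hq : q ≠ 0) (hC : C ≠ 0) (hAB : B ≠ A) {k : ℕ}
    (hqk : qPoch q q (k + 1) ≠ 0) (hCk : qPoch q C (k + 1) ≠ 0) :
    phi21Coeff q A B C (k + 1) - A * B / (C * q) * phi21Coeff q A B C k =
      B * (C - A) / (C * (B - A)) * phi21Coeff q (A / q) B C (k + 1) +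
        A * (B - C) / (C * (B - A)) * phi21Coeff q A (B / q) C (k + 1) := by
  set T := qPoch q A k * qPoch q B k / (qPoch q q (k + 1) * qPoch q C (k + 1))
  have hk : phi21Coeff q A B C k = T * ((1 - q * q ^ k) * (1 - C * q ^ k)) := by
    rw [qPoch_succ] at hqk hCk
    simp only [T, phi21Coeff]
    rw [div_mul_eq_mul_div, qPoch_succ, qPoch_succ,
      div_eq_div_iff (mul_ne_zero (left_ne_zero_of_mul hqk) (left_ne_zero_of_mul hCk))
        (mul_ne_zero hqk hCk)]
    ring
  have hk1 : ∀ A' B' : ℝ, phi21Coeff q A' B' C (k + 1) =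
      qPoch q A' (k + 1) * qPoch q B' (k + 1) / (qPoch q q (k + 1) * qPoch q C (k + 1)) :=
    fun _ _ => rfl
  rw [hk, hk1, hk1, hk1, qPoch_succ q A, qPoch_succ q B, qPoch_succ' q (A / q),
    qPoch_succ' q (B / q), div_mul_cancel₀ A hq, div_mul_cancel₀ B hq]
  linear_combination T * contiguous_factor_identity hq hC hAB (q ^ k)

lemma phi21Trunc_contiguous {q A B C : ℝ} (hq : q ≠ 0) (hC : C ≠ 0) (hAB : B ≠ A) (x : ℝ) :
    ∀ N : ℕ, qPoch q q N ≠ 0 → qPoch q C N ≠ 0 →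
      phi21Trunc q A B C (N + 1) x - x * (A * B / (C * q)) * phi21Trunc q A B C N x =
        B * (C - A) / (C * (B - A)) * phi21Trunc q (A / q) B C (N + 1) x +
          A * (B - C) / (C * (B - A)) * phi21Trunc q A (B / q) C (N + 1) x
  | 0, _, _ => by
    have hBA : B - A ≠ 0 := sub_ne_zero.mpr hAB
    rw [zero_add, phi21Trunc_zero, phi21Trunc_one, phi21Trunc_one, phi21Trunc_one]
    field_simp
    ring
  | N + 1, hqN, hCN => by
    have ih := phi21Trunc_contiguous hq hC hAB x N
      (left_ne_zero_of_mul (qPoch_succ q q N ▸ hqN)) (left_ne_zero_of_mul (qPoch_succ q C N ▸ hCN))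
    have hcoeff := phi21Coeff_contiguous (A := A) (B := B) hq hC hAB hqN hCN
    rw [phi21Trunc_succ q A B C N] at ih
    rw [phi21Trunc_succ q A B C (N + 1), phi21Trunc_succ q A B C N,
      phi21Trunc_succ q (A / q) B C (N + 1), phi21Trunc_succ q A (B / q) C (N + 1)]
    linear_combination ih + x ^ (N + 1) * hcoeff

lemma lqJacobi_eq_phi21Trunc (q a b : ℝ) (n : ℕ) (z : ℝ) :
    lqJacobi q a b n z = phi21Trunc q (q ^ n)⁻¹ (a * b * q ^ (n + 1)) (a * q) (n + 1) (q * z) := by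
  rw [lqJacobi, Real.rpow_neg_natCast, zpow_neg, zpow_natCast]
  rfl

theorem stmt5_general (q a b : ℝ) (hq0 : 0 < q) (hq1 : q < 1) (ha0 : 0 < a * q) (ha1 : a * q < 1)
    (n : ℕ) (h : a * b * q ^ (2 * n + 2) ≠ 1) (z : ℝ) :
    (1 - z * q * b) * lqJacobi q a (b * q) n z =
      b * q ^ (n + 1) * (a * q ^ (n + 1) - 1) / (a * b * q ^ (2 * n + 2) - 1) *
          lqJacobi q a b (n + 1) z +
        (b * q ^ (n + 1) - 1) / (a * b * q ^ (2 * n + 2) - 1) * lqJacobi q a b n z := by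
  have hq : q ≠ 0 := hq0.ne'
  have ha : a ≠ 0 := left_ne_zero_of_mul ha0.ne'
  have hD : a * b * q ^ (2 * n + 2) - 1 ≠ 0 := sub_ne_zero.mpr h
  set A := (q ^ n)⁻¹
  set B := a * b * q ^ (n + 2)
  have hAB : B - A ≠ 0 := by
    refine sub_ne_zero.mpr fun hBA => h ?_
    simp only [A, B] at hBA
    field_simp at hBA
    linear_combination hBA
  have key := phi21Trunc_contiguous hq ha0.ne' (sub_ne_zero.mp hAB) (q * z) (n + 1)
    (qPoch_pos hq0.le hq1.le hq1 _).ne' (qPoch_pos hq0.le hq1.le ha1 _).ne'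
  have hr : q * z * (A * B / (a * q * q)) = z * q * b := by
    simp only [A, B]; field_simp; ring
  have hc1 : B * (a * q - A) / (a * q * (B - A)) =
      b * q ^ (n + 1) * (a * q ^ (n + 1) - 1) / (a * b * q ^ (2 * n + 2) - 1) := by
    rw [div_eq_div_iff (mul_ne_zero ha0.ne' hAB) hD]; simp only [A, B]; field_simp; ring
  have hc2 : A * (B - a * q) / (a * q * (B - A)) =
      (b * q ^ (n + 1) - 1) / (a * b * q ^ (2 * n + 2) - 1) := by
    rw [div_eq_div_iff (mul_ne_zero ha0.ne' hAB) hD]; simp only [A, B]; field_simp; ring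
  rw [phi21Trunc_succ_of_qPoch_eq_zero (qPoch_inv_pow_self hq n),
    phi21Trunc_succ_of_qPoch_eq_zero (qPoch_inv_pow_self hq n), hr, hc1, hc2] at key
  have hAq : (q ^ (n + 1))⁻¹ = A / q := by rw [pow_succ, mul_inv, div_eq_mul_inv]
  have hBq : a * b * q ^ (n + 1) = B / q := by simp only [B]; field_simp; ring
  rw [lqJacobi_eq_phi21Trunc, lqJacobi_eq_phi21Trunc, lqJacobi_eq_phi21Trunc, hAq, hBq,
    show a * (b * q) * q ^ (n + 1) = B by ring]
  linear_combination key

/-- contiguous relation for little q-Jacobi polynomials: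
`(1 - zqb) p_n(z;a,bq|q) = (bq^{n+1}(aq^{n+1}-1)/(abq^{2n+2}-1)) p_{n+1}(z;a,b|q)
+ ((bq^{n+1}-1)/(abq^{2n+2}-1)) p_n(z;a,b|q)`. -/
theorem stmt5 (q a b : ℝ) (hq0 : 0 < q) (hq1 : q < 1) (ha0 : 0 < a * q) (ha1 : a * q < 1)
    (hb : b * q < 1) (n : ℕ) (h : a * b * q ^ (2 * n + 2) ≠ 1) (z : ℝ) :
    (1 - z * q * b) * lqJacobi q a (b * q) n z =
      b * q ^ (n + 1) * (a * q ^ (n + 1) - 1) / (a * b * q ^ (2 * n + 2) - 1) *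
          lqJacobi q a b (n + 1) z +
        (b * q ^ (n + 1) - 1) / (a * b * q ^ (2 * n + 2) - 1) * lqJacobi q a b n z :=
  stmt5_general q a b hq0 hq1 ha0 ha1 n h z
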